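/- arXiv:1610.09607 — 6 statements merged into one kernel-verified Lean document; each statement's English description precedes it below -/
import Mathlib

section
/- Let x0, y0, u1, u2, c : ℤ with 2 ≤ u2 < u1, x0 ≤ −1, and y0 ≤ −1. Then there exists n : ℕ such that x0·u1^n − y0·u2^n < c. (Termination rule of §3.2.2 for two monotonically decreasing geometric updates with |u1| > |u2|.) -/
open Filter

/-- Writing `b ^ n - K * a ^ n = a ^ n * ((b / a) ^ n - K)`, both factors tend to infinity. -/
theorem tendsto_pow_sub_const_mul_pow_atTop {𝕜 : Type*} [Field 𝕜] [LinearOrder 𝕜]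
    [IsStrictOrderedRing 𝕜] [Archimedean 𝕜] {a b : 𝕜} (K : 𝕜) (ha : 1 < a) (hab : a < b) :
    Tendsto (fun n : ℕ ↦ b ^ n - K * a ^ n) atTop atTop := by
  have ha₀ : a ≠ 0 := (zero_lt_one.trans ha).ne'
  have hratio : 1 < b / a := (one_lt_div (zero_lt_one.trans ha)).2 hab
  have hfactor : Tendsto (fun n : ℕ ↦ (b / a) ^ n - K) atTop atTop := by
    simpa only [sub_eq_add_neg] using
      tendsto_atTop_add_const_right _ (-K) (tendsto_pow_atTop_atTop_of_one_lt hratio)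
  refine ((tendsto_pow_atTop_atTop_of_one_lt ha).atTop_mul_atTop₀ hfactor).congr fun n ↦ ?_
  rw [div_pow, mul_sub, mul_div_cancel₀ _ (pow_ne_zero n ha₀), mul_comm K]

theorem geom_geom_decreasing_terminating_general (x0 y0 u1 u2 c : ℤ)
    (hu2 : 2 ≤ u2) (hu : u2 < u1) (hx : x0 ≤ -1) :
    ∃ n : ℕ, x0 * u1 ^ n - y0 * u2 ^ n < c := by
  have hlim := tendsto_pow_sub_const_mul_pow_atTop (a := (u2 : ℚ)) (b := u1) (-y0)
    (one_lt_two.trans_le (by exact_mod_cast hu2)) (by exact_mod_cast hu)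
  obtain ⟨n, hn⟩ := (hlim.eventually_gt_atTop (-c : ℚ)).exists
  have hdominant : -c < u1 ^ n + y0 * u2 ^ n := by
    simp only [neg_mul, sub_neg_eq_add] at hn
    exact_mod_cast hn
  have hx_term : x0 * u1 ^ n ≤ -1 * u1 ^ n :=
    mul_le_mul_of_nonneg_right hx (pow_nonneg (by omega) n)
  exact ⟨n, by linarith⟩

/-- Termination rule of §3.2.2 for two decreasing geometric updates with |u1| > |u2|. -/
theorem geom_geom_decreasing_terminating (x0 y0 u1 u2 c : ℤ)
    (hu2 : 2 ≤ u2) (hu : u2 < u1) (hx : x0 ≤ -1) (hy : y0 ≤ -1) :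
    ∃ n : ℕ, x0 * u1 ^ n - y0 * u2 ^ n < c :=
  geom_geom_decreasing_terminating_general x0 y0 u1 u2 c hu2 hu hx
end

section
/- Let d, c1, v : ℤ with v ≥ 1 and d ≤ c1, and let n : ℤ with n ≥ 1 satisfy d + n·v > c1 and d + (n−1)·v ≤ c1 (i.e., d + n·v is the first value of the progression d, d+v, d+2v, … that exceeds c1). Then d + n·v = (c1 + v) − ((c1 − d) % v), where % denotes the remainder of integer division by v (taken in [0, v)). -/
theorem Int.emod_eq_sub_mul_of_nonneg_of_lt {a q v : ℤ} (h0 : 0 ≤ a - q * v) (h1 : a - q * v < v) :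
    a % v = a - q * v := by
  rw [← Int.sub_mul_emod_self_right a q v, Int.emod_eq_of_lt h0 h1]

theorem psi_a_formula_general (d c1 v n : ℤ)
    (hgt : d + n * v > c1) (hle : d + (n - 1) * v ≤ c1) :
    d + n * v = (c1 + v) - ((c1 - d) % v) := by
  have hrem : (c1 - d) % v = c1 - d - (n - 1) * v :=
    Int.emod_eq_sub_mul_of_nonneg_of_lt (by linarith) (by linarith)
  rw [hrem]
  ring

/-- Formula ψ_a of §4.1 (case ∼_B = '≤'): the first value of the
progression d, d+v, d+2v, … exceeding c1 equals (c1 + v) − ((c1 − d) % v). -/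
theorem psi_a_formula (d c1 v n : ℤ)
    (hv : v ≥ 1) (hd : d ≤ c1) (hn : n ≥ 1)
    (hgt : d + n * v > c1) (hle : d + (n - 1) * v ≤ c1) :
    d + n * v = (c1 + v) - ((c1 - d) % v) :=
  psi_a_formula_general d c1 v n hgt hle
end

section
/- Let c, c1, b : ℤ, let f : ℤ → ℤ satisfy f(z) > z for all z (a monotonically increasing update), and let x : ℕ → ℤ satisfy x(n+1) = (if x(n) ≤ c1 then f(x(n)) else b). If x(0) ≥ c and b ≥ c, then x(n) ≥ c for every n : ℕ. (Soundness of the non-termination formula NT = (x0 ⊨ φ ∧ b ∼_φ c) of §4.1, case 1 / Table 3 rows 1–4: the multi-path loop 'while (x ≥ c) do { if (x ≤ c1) then x := f(x) else x := b }' is non-terminating under these conditions.) -/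
/-- Soundness of NT = (x0 ⊨ φ ∧ b ∼_φ c) of §4.1, case 1 / Table 3 rows 1–4:
`while (x ≥ c) do { if (x ≤ c1) then x := f(x) else x := b }` with f increasing. -/
theorem table3_rows1to4_nonterminating (c c1 b : ℤ) (f : ℤ → ℤ)
    (hf : ∀ z : ℤ, f z > z) (x : ℕ → ℤ)
    (hrec : ∀ n : ℕ, x (n + 1) = if x n ≤ c1 then f (x n) else b)
    (h0 : x 0 ≥ c) (hb : b ≥ c) :
    ∀ n : ℕ, x n ≥ c := by
  intro n
  induction n with
  | zero => exact h0
  | succ k ih =>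
    rw [hrec k]
    split_ifs
    · exact ih.trans (hf _).le
    · exact hb
end

section
/- Let c, c1, b : ℤ, let f : ℤ → ℤ satisfy f(z) < z for all z (a monotonically decreasing update), and let x : ℕ → ℤ satisfy x(n+1) = (if x(n) ≤ c1 then f(x(n)) else b). If x(0) ≥ c, x(0) > c1, b ≥ c, and b > c1, then x(n) ≥ c for every n : ℕ. (Soundness of the non-termination formula NT = (x0 ⊨ φ ∧ x0 ⊭ B ∧ b ∼_φ c ∧ b ∼_{¬B} c1) of §4.1, case 2 / Table 3 rows 5–6: the multi-path loop 'while (x ≥ c) do { if (x ≤ c1) then x := f(x) else x := b }' is non-terminating under these conditions.) -/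
/-! Neither `x 0` nor `b` passes the inner test `x ≤ c1`, so every iteration takes the `else`
branch and the orbit is `x 0, b, b, …`, all of which satisfy the loop guard. -/

section ResetLoop

variable {α : Type*} {p : α → Prop} [DecidablePred p] {g : α → α} {b : α} {x : ℕ → α}

theorem not_guard_of_reset_loop (hrec : ∀ n, x (n + 1) = if p (x n) then g (x n) else b)
    (h0 : ¬p (x 0)) (hb : ¬p b) : ∀ n, ¬p (x n)
  | 0 => h0
  | n + 1 => by rwa [hrec n, if_neg (not_guard_of_reset_loop hrec h0 hb n)]

theorem succ_eq_of_reset_loop (hrec : ∀ n, x (n + 1) = if p (x n) then g (x n) else b)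
    (h0 : ¬p (x 0)) (hb : ¬p b) (n : ℕ) : x (n + 1) = b := by
  rw [hrec n, if_neg (not_guard_of_reset_loop hrec h0 hb n)]

end ResetLoop

theorem table3_rows5to6_nonterminating_general (c c1 b : ℤ) (f : ℤ → ℤ)
    (x : ℕ → ℤ)
    (hrec : ∀ n : ℕ, x (n + 1) = if x n ≤ c1 then f (x n) else b)
    (h0 : x 0 ≥ c) (h0B : x 0 > c1) (hb : b ≥ c) (hbB : b > c1) :
    ∀ n : ℕ, x n ≥ c := by
  rintro (_ | n)
  · exact h0
  · rwa [succ_eq_of_reset_loop (p := (· ≤ c1)) hrec h0B.not_ge hbB.not_ge n]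

/-- Soundness of NT = (x0 ⊨ φ ∧ x0 ⊭ B ∧ b ∼_φ c ∧ b ∼_{¬B} c1) of §4.1,
case 2 / Table 3 rows 5–6: `while (x ≥ c) do { if (x ≤ c1) then x := f(x) else x := b }`
with f decreasing. -/
theorem table3_rows5to6_nonterminating (c c1 b : ℤ) (f : ℤ → ℤ)
    (hf : ∀ z : ℤ, f z < z) (x : ℕ → ℤ)
    (hrec : ∀ n : ℕ, x (n + 1) = if x n ≤ c1 then f (x n) else b)
    (h0 : x 0 ≥ c) (h0B : x 0 > c1) (hb : b ≥ c) (hbB : b > c1) :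
    ∀ n : ℕ, x n ≥ c :=
  table3_rows5to6_nonterminating_general c c1 b f x hrec h0 h0B hb hbB
end

section
/- Let c, c1, b : ℤ, let f : ℤ → ℤ satisfy f(z) < z for all z (a monotonically decreasing update), and let x : ℕ → ℤ satisfy x(n+1) = (if x(n) ≤ c1 then f(x(n)) else b). If either (x(0) ≤ c and x(0) ≤ c1) or (x(0) ≤ c and x(0) > c1 and b ≤ c), then x(n) ≤ c for every n : ℕ. (Soundness of the non-termination formula NT = ((x0 ⊨ φ ∧ x0 ⊨ B) ∨ (x0 ⊨ φ ∧ x0 ⊭ B ∧ b ∼_φ c)) of §4.1, case 4 / Table 3 rows 11–12: the multi-path loop 'while (x ≤ c) do { if (x ≤ c1) then x := f(x) else x := b }' is non-terminating under these conditions.) -/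
/-!
Each disjunct of the hypothesis puts `x 0` in a set that the loop body maps into itself and that
lies below the guard bound `c`. Since the update `f` never increases its argument, the body keeps
`Iic (c ⊓ c1)` invariant: from there the then-branch is always taken. When `b ≤ c`, it also keeps
`Iic c` invariant, whichever branch is taken.
-/

open Set

theorem Set.MapsTo.mem_of_succ_eq {α : Type*} {g : α → α} {s : Set α} (hg : MapsTo g s s)
    {x : ℕ → α} (hrec : ∀ n, x (n + 1) = g (x n)) (h0 : x 0 ∈ s) : ∀ n, x n ∈ s
  | 0 => h0
  | n + 1 => hrec n ▸ hg (hg.mem_of_succ_eq hrec h0 n)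

section LoopBody

variable {α : Type*} [LinearOrder α] {f : α → α} (c c1 b : α)

theorem mapsTo_ite_Iic_inf (hf : ∀ z, f z ≤ z) :
    MapsTo (fun z => if z ≤ c1 then f z else b) (Iic (c ⊓ c1)) (Iic (c ⊓ c1)) := by
  intro z hz
  have hzc1 : z ≤ c1 := hz.trans inf_le_right
  show (if z ≤ c1 then f z else b) ≤ c ⊓ c1
  rw [if_pos hzc1]
  exact (hf z).trans hz

theorem mapsTo_ite_Iic (hf : ∀ z, f z ≤ z) (hb : b ≤ c) :
    MapsTo (fun z => if z ≤ c1 then f z else b) (Iic c) (Iic c) := by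
  intro z hz
  show (if z ≤ c1 then f z else b) ≤ c
  split_ifs
  · exact (hf z).trans hz
  · exact hb

end LoopBody

/-- Soundness of NT = ((x0 ⊨ φ ∧ x0 ⊨ B) ∨ (x0 ⊨ φ ∧ x0 ⊭ B ∧ b ∼_φ c))
of §4.1, case 4 / Table 3 rows 11–12:
`while (x ≤ c) do { if (x ≤ c1) then x := f(x) else x := b }` with f decreasing. -/
theorem table3_rows11to12_nonterminating (c c1 b : ℤ) (f : ℤ → ℤ)
    (hf : ∀ z : ℤ, f z < z) (x : ℕ → ℤ)
    (hrec : ∀ n : ℕ, x (n + 1) = if x n ≤ c1 then f (x n) else b)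
    (h0 : (x 0 ≤ c ∧ x 0 ≤ c1) ∨ (x 0 ≤ c ∧ x 0 > c1 ∧ b ≤ c)) :
    ∀ n : ℕ, x n ≤ c := by
  have hf' : ∀ z, f z ≤ z := fun z => (hf z).le
  rcases h0 with ⟨hc, hc1⟩ | ⟨hc, -, hb⟩
  · intro n
    exact ((mapsTo_ite_Iic_inf c c1 b hf').mem_of_succ_eq hrec (le_inf hc hc1) n).trans
      inf_le_left
  · exact (mapsTo_ite_Iic c c1 b hf' hb).mem_of_succ_eq hrec hc
end

section
/- Let c, c1 : ℤ, let f, g : ℤ → ℤ satisfy f(z) > z and g(z) < z for all z (a monotonically increasing and a monotonically decreasing update), and let x : ℕ → ℤ satisfy x(n+1) = (if x(n) ≥ c1 then f(x(n)) else g(x(n))). If x(0) ≥ c and x(0) ≥ c1, then x(n) ≥ c for every n : ℕ. (Soundness of the non-termination formula NT = (x0 ⊨ φ ∧ x0 ⊨ B) of §4.2, case 1 / Table 3 row 17: the multi-path loop 'while (x ≥ c) do { if (x ≥ c1) then x := f(x) else x := g(x) }' with both update statements strictly monotone is non-terminating under these conditions.) -/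
section IteStep

variable {α : Type*} [Preorder α] [DecidableLE α] {c₁ : α} {f g : α → α} {x : ℕ → α}

theorem le_of_ite_step (hf : ∀ z, z ≤ f z)
    (hrec : ∀ n, x (n + 1) = if x n ≥ c₁ then f (x n) else g (x n)) (h₀ : x 0 ≥ c₁) (n : ℕ) :
    x n ≥ c₁ := by
  induction n with
  | zero => exact h₀
  | succ n ih => calc
      c₁ ≤ x n := ih
      _ ≤ f (x n) := hf (x n)
      _ = x (n + 1) := by rw [hrec n, if_pos ih]

theorem monotone_of_ite_step (hf : ∀ z, z ≤ f z)
    (hrec : ∀ n, x (n + 1) = if x n ≥ c₁ then f (x n) else g (x n)) (h₀ : x 0 ≥ c₁) :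
    Monotone x :=
  monotone_nat_of_le_succ fun n => by
    rw [hrec n, if_pos (le_of_ite_step hf hrec h₀ n)]
    exact hf (x n)

end IteStep

theorem table3_row17_nonterminating_general (c c1 : ℤ) (f g : ℤ → ℤ)
    (hf : ∀ z : ℤ, f z > z) (x : ℕ → ℤ)
    (hrec : ∀ n : ℕ, x (n + 1) = if x n ≥ c1 then f (x n) else g (x n))
    (h0 : x 0 ≥ c) (h0B : x 0 ≥ c1) :
    ∀ n : ℕ, x n ≥ c := fun n =>
  h0.trans (monotone_of_ite_step (fun z => (hf z).le) hrec h0B (Nat.zero_le n))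

/-- Soundness of NT = (x0 ⊨ φ ∧ x0 ⊨ B) of §4.2, case 1 / Table 3 row 17:
`while (x ≥ c) do { if (x ≥ c1) then x := f(x) else x := g(x) }` with f increasing and
g decreasing. -/
theorem table3_row17_nonterminating (c c1 : ℤ) (f g : ℤ → ℤ)
    (hf : ∀ z : ℤ, f z > z) (hg : ∀ z : ℤ, g z < z) (x : ℕ → ℤ)
    (hrec : ∀ n : ℕ, x (n + 1) = if x n ≥ c1 then f (x n) else g (x n))
    (h0 : x 0 ≥ c) (h0B : x 0 ≥ c1) :
    ∀ n : ℕ, x n ≥ c :=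
  table3_row17_nonterminating_general c c1 f g hf x hrec h0 h0B
end
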